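/- Fix a strategy σ = (β_1,…,β_S) ∈ [0,1]^S and a sequence of instances of the non-binary voting model, and for each N let Σ_N be the symmetric profile in which every agent plays σ. Define, for each state ω, f_{ωA} = Σ_s P_{sω}·β_s − μ and f_{ωR} = Σ_s P_{sω}·(1−β_s) − (1−μ) (these are independent of N), and let f = min( min_{ω∈𝓗} f_{ωA}, min_{ω∈𝓛} f_{ωR} ). If f > 0 then lim_{N→∞} A(Σ_N) = 1. If f ≤ 0 then there exist constants N₀ > 0 and η' > 0 such that A(Σ_N) ≤ 1 − η' for all N > N₀. -/

import Mathlib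

namespace Voting

/-- The two alternatives: `A` (accept) and `R` (reject). -/
inductive Alt : Type
  | A
  | R
deriving DecidableEq

instance instFintypeAlt : Fintype Alt where
  elems := {Alt.A, Alt.R}
  complete := by
    intro x
    cases x <;> simp

/-- The shared parameters of a non-binary voting instance with `M` world states
and `S` signals. -/
structure NBParams (M S : ℕ) where
  hM : 0 < M
  hS : 0 < S
  /-- majority threshold -/
  μ : ℝ
  hμ0 : 0 < μ
  hμ1 : μ < 1
  /-- prior of the world states -/
  P : Fin M → ℝ
  hP : ∀ ω, 0 < P ω
  hPsum : ∑ ω, P ω = 1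
  /-- `Psig s ω` : probability of signal `s` in state `ω` -/
  Psig : Fin S → Fin M → ℝ
  hPsig : ∀ s ω, 0 ≤ Psig s ω
  hPsigsum : ∀ ω, ∑ s, Psig s ω = 1
  /-- stochastic dominance: higher states make higher signals strictly more likely -/
  hdom : ∀ ω₁ ω₂ : Fin M, ω₂ < ω₁ → ∀ s : Fin S, 0 < (s : ℕ) →
    ∑ s' ∈ Finset.univ.filter (fun s' => s ≤ s'), Psig s' ω₂ <
      ∑ s' ∈ Finset.univ.filter (fun s' => s ≤ s'), Psig s' ω₁
  /-- upper bound of the utility functions -/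
  B : ℕ
  hB : 0 < B
  /-- `αA ω` : the (approximate) fraction of agents preferring `A` in state `ω` -/
  αA : Fin M → ℝ
  hαA0 : ∀ ω, 0 ≤ αA ω
  hαA1 : ∀ ω, αA ω ≤ 1
  hαAμ : ∀ ω, αA ω ≠ μ
  hαAmono : Monotone αA
  /-- `𝓛 = {ω | αA ω < μ}` is nonempty -/
  hLne : ∃ ω, αA ω < μ
  /-- `𝓗 = {ω | αA ω > μ}` is nonempty -/
  hHne : ∃ ω, μ < αA ω

/-- A non-binary voting instance with `N` agents. -/
structure NBInstance (M S : ℕ) extends NBParams M S where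
  N : ℕ
  /-- the utility function of each agent -/
  u : Fin N → Fin M → Alt → ℕ
  hub : ∀ n ω a, u n ω a ≤ B
  huA : ∀ n, StrictMono fun ω => u n ω Alt.A
  huR : ∀ n, StrictAnti fun ω => u n ω Alt.R
  hne : ∀ n ω, u n ω Alt.A ≠ u n ω Alt.R
  /-- in each state `ω`, exactly `⌊(1 - αA ω)·N⌋` agents prefer `R` -/
  hcount : ∀ ω, ({n : Fin N | u n ω Alt.A < u n ω Alt.R}).ncard = ⌊(1 - αA ω) * (N : ℝ)⌋₊

variable {M S : ℕ}

/-- A (mixed) strategy profile: for each agent, the probability of voting for `A`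
upon each signal. -/
abbrev NBProfile (I : NBInstance M S) : Type := Fin I.N → Fin S → ℝ

/-- All coordinates of the profile are genuine probabilities. -/
def NBValidProfile (I : NBInstance M S) (sp : NBProfile I) : Prop :=
  ∀ n s, 0 ≤ sp n s ∧ sp n s ≤ 1

/-- Probability that agent `n` votes for `A`, conditioned on the world state `ω`. -/
noncomputable def nbpA (I : NBInstance M S) (sp : NBProfile I) (n : Fin I.N) (ω : Fin M) : ℝ :=
  ∑ s, I.Psig s ω * sp n s

open Finset in
/-- `nblambdaA I sp ω` : the probability that at least `μ·N` agents vote for `A`,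
conditioned on the world state `ω` (conditionally on the state, the votes are
independent, agent `n` voting for `A` with probability `nbpA I sp n ω`). -/
noncomputable def nblambdaA (I : NBInstance M S) (sp : NBProfile I) (ω : Fin M) : ℝ :=
  ∑ v : Fin I.N → Bool,
    if I.μ * (I.N : ℝ) ≤ ((univ.filter fun n => v n = true).card : ℝ) then
      ∏ n, (if v n = true then nbpA I sp n ω else 1 - nbpA I sp n ω)
    else 0

/-- The set `𝓛` of world states where `R` is the informed majority decision. -/
noncomputable def Lset (p : NBParams M S) : Finset (Fin M) :=
  Finset.univ.filter fun ω => p.αA ω < p.μ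

/-- The set `𝓗` of world states where `A` is the informed majority decision. -/
noncomputable def Hset (p : NBParams M S) : Finset (Fin M) :=
  Finset.univ.filter fun ω => p.μ < p.αA ω

lemma Lset_nonempty (p : NBParams M S) : (Lset p).Nonempty := by
  obtain ⟨ω, hω⟩ := p.hLne
  exact ⟨ω, Finset.mem_filter.mpr ⟨Finset.mem_univ ω, hω⟩⟩

lemma Hset_nonempty (p : NBParams M S) : (Hset p).Nonempty := by
  obtain ⟨ω, hω⟩ := p.hHne
  exact ⟨ω, Finset.mem_filter.mpr ⟨Finset.mem_univ ω, hω⟩⟩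

/-- The fidelity of a strategy profile: the probability that the informed majority
decision is reached. -/
noncomputable def nbfid (I : NBInstance M S) (sp : NBProfile I) : ℝ :=
  ∑ ω ∈ Lset I.toNBParams, I.P ω * (1 - nblambdaA I sp ω) +
    ∑ ω ∈ Hset I.toNBParams, I.P ω * nblambdaA I sp ω

/-- The ex-ante expected utility of agent `n` under profile `sp`. -/
noncomputable def nbut (I : NBInstance M S) (sp : NBProfile I) (n : Fin I.N) : ℝ :=
  ∑ ω, I.P ω * (nblambdaA I sp ω * (I.u n ω Alt.A : ℝ)
      + (1 - nblambdaA I sp ω) * (I.u n ω Alt.R : ℝ))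

/-- A (candidate) friendly agent prefers `A` in some state of `𝓛`. -/
def NBFriendly (I : NBInstance M S) (n : Fin I.N) : Prop :=
  ∃ ω, I.αA ω < I.μ ∧ I.u n ω Alt.R < I.u n ω Alt.A

/-- A (candidate) unfriendly agent prefers `R` in some state of `𝓗`. -/
def NBUnfriendly (I : NBInstance M S) (n : Fin I.N) : Prop :=
  ∃ ω, I.μ < I.αA ω ∧ I.u n ω Alt.A < I.u n ω Alt.R

/-- A contingent agent prefers `R` exactly in the states of `𝓛`. -/
def NBContingent (I : NBInstance M S) (n : Fin I.N) : Prop :=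
  ∀ ω, I.u n ω Alt.A < I.u n ω Alt.R ↔ I.αA ω < I.μ

/-- A profile is regular if every friendly agent always votes for `A` and every
unfriendly agent always votes for `R`. -/
def NBRegular (I : NBInstance M S) (sp : NBProfile I) : Prop :=
  (∀ n, NBFriendly I n → ∀ s, sp n s = 1) ∧ (∀ n, NBUnfriendly I n → ∀ s, sp n s = 0)

/-- `ε`-strong Bayes Nash Equilibrium: no coalition `D` can deviate so that no member
is worse off and some member gains more than `ε`. -/
def NBIsEpsBNE (I : NBInstance M S) (sp : NBProfile I) (ε : ℝ) : Prop :=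
  ¬ ∃ (D : Set (Fin I.N)) (sp' : NBProfile I),
      NBValidProfile I sp' ∧
      (∀ n, n ∉ D → sp' n = sp n) ∧
      (∀ n ∈ D, nbut I sp n ≤ nbut I sp' n) ∧
      (∃ n ∈ D, nbut I sp n + ε < nbut I sp' n)

/-- Number of friendly agents. -/
noncomputable def nbFriendlyCount (I : NBInstance M S) : ℕ := {n | NBFriendly I n}.ncard

/-- Number of unfriendly agents. -/
noncomputable def nbUnfriendlyCount (I : NBInstance M S) : ℕ := {n | NBUnfriendly I n}.ncard

/-- A sequence of non-binary voting instances sharing the same parameters, in which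
the instance indexed by `N` has `N` agents. -/
structure NBSeq (M S : ℕ) where
  params : NBParams M S
  inst : ℕ → NBInstance M S
  hN : ∀ N, (inst N).N = N
  hshare : ∀ N, (inst N).toNBParams = params

/-- Excess expected vote share of `A` in state `ω` for the symmetric profile induced by
the strategy `σ` (independent of the number of agents). -/
noncomputable def symfA {M S : ℕ} (p : NBParams M S) (σ : Fin S → ℝ) (ω : Fin M) : ℝ :=
  ∑ s, p.Psig s ω * σ s - p.μ

/-- Excess expected vote share of `R` in state `ω` for the symmetric profile induced by
the strategy `σ` (independent of the number of agents). -/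
noncomputable def symfR {M S : ℕ} (p : NBParams M S) (σ : Fin S → ℝ) (ω : Fin M) : ℝ :=
  ∑ s, p.Psig s ω * (1 - σ s) - (1 - p.μ)

/-- The excess expected vote share `f` of the symmetric profile induced by `σ`. -/
noncomputable def symf {M S : ℕ} (p : NBParams M S) (σ : Fin S → ℝ) : ℝ :=
  min ((Hset p).inf' (Hset_nonempty p) (symfA p σ)) ((Lset p).inf' (Lset_nonempty p) (symfR p σ))


section Aux
set_option maxHeartbeats 1000000
namespace VT
open Finset


noncomputable def w (p : ℝ) (b : Bool) : ℝ := if b = true then p else 1 - p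

noncomputable def W (p : ℝ) (N : ℕ) (v : Fin N → Bool) : ℝ := ∏ n, w p (v n)

noncomputable def c (p : ℝ) (b : Bool) : ℝ := (if b = true then 1 else 0) - p

noncomputable def X (p : ℝ) (N : ℕ) (v : Fin N → Bool) : ℝ := ∑ n, c p (v n)

lemma w_nonneg {p : ℝ} (hp0 : 0 ≤ p) (hp1 : p ≤ 1) (b : Bool) : 0 ≤ w p b := by
  unfold w; split <;> linarith

lemma W_nonneg {p : ℝ} (hp0 : 0 ≤ p) (hp1 : p ≤ 1) (N : ℕ) (v : Fin N → Bool) :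
    0 ≤ W p N v := Finset.prod_nonneg fun n _ => w_nonneg hp0 hp1 _

lemma sum_cons (N : ℕ) (F : (Fin (N+1) → Bool) → ℝ) :
    ∑ v, F v = ∑ b : Bool, ∑ v : Fin N → Bool, F (Fin.cons b v) := by
  rw [← (Fin.consEquiv (fun _ => Bool)).sum_comp F, Fintype.sum_prod_type]
  rfl

lemma W_cons (p : ℝ) (N : ℕ) (b : Bool) (v : Fin N → Bool) :
    W p (N+1) (Fin.cons b v) = w p b * W p N v := by
  unfold W
  rw [Fin.prod_univ_succ]
  simp

lemma X_cons (p : ℝ) (N : ℕ) (b : Bool) (v : Fin N → Bool) :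
    X p (N+1) (Fin.cons b v) = c p b + X p N v := by
  unfold X
  rw [Fin.sum_univ_succ]
  simp

lemma double {N : ℕ} (f : Bool → ℝ) (g : (Fin N → Bool) → ℝ) :
    ∑ b : Bool, ∑ v : Fin N → Bool, f b * g v = (∑ b : Bool, f b) * (∑ v, g v) := by
  rw [Finset.sum_mul_sum]

lemma sum_w {p : ℝ} : ∑ b : Bool, w p b = 1 := by simp [w]

lemma sum_wc {p : ℝ} : ∑ b : Bool, w p b * c p b = 0 := by simp [w, c]; ring

lemma sum_wc2 {p : ℝ} : ∑ b : Bool, w p b * c p b ^ 2 = p * (1 - p) := by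
  simp [w, c]; ring

lemma sum_wc4_le {p : ℝ} (hp0 : 0 ≤ p) (hp1 : p ≤ 1) :
    ∑ b : Bool, w p b * c p b ^ 4 ≤ p * (1 - p) := by
  simp [w, c]; nlinarith [sq_nonneg p, sq_nonneg (1-p), mul_nonneg hp0 (by linarith : (0:ℝ) ≤ 1 - p)]

lemma M0 (p : ℝ) (N : ℕ) : ∑ v : Fin N → Bool, W p N v = 1 := by
  induction N with
  | zero => simp [W]
  | succ n ih =>
    rw [sum_cons]
    simp only [W_cons]
    rw [double, ih, sum_w, mul_one]

lemma M1 (p : ℝ) (N : ℕ) : ∑ v : Fin N → Bool, W p N v * X p N v = 0 := by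
  induction N with
  | zero => simp [W, X]
  | succ n ih =>
    rw [sum_cons]
    simp only [W_cons, X_cons]
    have : ∀ b (v : Fin n → Bool), w p b * W p n v * (c p b + X p n v)
        = (w p b * c p b) * W p n v + w p b * (W p n v * X p n v) := by intros; ring
    simp only [this, Finset.sum_add_distrib, double, ih, sum_w, sum_wc]
    ring

lemma M2 (p : ℝ) (N : ℕ) :
    ∑ v : Fin N → Bool, W p N v * X p N v ^ 2 = N * (p * (1 - p)) := by
  induction N with
  | zero => simp [W, X]
  | succ n ih =>
    rw [sum_cons]
    simp only [W_cons, X_cons]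
    have : ∀ b (v : Fin n → Bool), w p b * W p n v * (c p b + X p n v) ^ 2
        = (w p b * c p b ^ 2) * W p n v + (w p b * c p b) * (2 * (W p n v * X p n v))
          + w p b * (W p n v * X p n v ^ 2) := by intros; ring
    simp only [this, Finset.sum_add_distrib, double, ih, M0, M1, sum_w, sum_wc, sum_wc2]
    push_cast
    ring

lemma M4 (p : ℝ) (hp0 : 0 ≤ p) (hp1 : p ≤ 1) (N : ℕ) :
    ∑ v : Fin N → Bool, W p N v * X p N v ^ 4
      ≤ 3 * (N : ℝ)^2 * (p * (1 - p))^2 + N * (p * (1 - p)) := by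
  induction N with
  | zero => simp [W, X]
  | succ n ih =>
    rw [sum_cons]
    simp only [W_cons, X_cons]
    have : ∀ b (v : Fin n → Bool), w p b * W p n v * (c p b + X p n v) ^ 4
        = (w p b * c p b ^ 4) * W p n v + (w p b * c p b ^ 3) * (4 * (W p n v * X p n v))
          + (w p b * c p b ^ 2) * (6 * (W p n v * X p n v ^ 2))
          + (w p b * c p b) * (4 * (W p n v * X p n v ^ 3))
          + w p b * (W p n v * X p n v ^ 4) := by intros; ring
    simp only [this, Finset.sum_add_distrib, double, ← Finset.mul_sum, M0, M1, M2, sum_w,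
      sum_wc, sum_wc2]
    simp only [← Finset.sum_mul, sum_w, sum_wc, sum_wc2, mul_zero, zero_mul, mul_one, one_mul,
      add_zero, zero_add, Finset.sum_const_zero]
    have h4 := sum_wc4_le hp0 hp1
    have hm2 : 0 ≤ p * (1 - p) := mul_nonneg hp0 (by linarith)
    push_cast
    nlinarith [hm2, ih, Nat.cast_nonneg (α := ℝ) n, sq_nonneg (p*(1-p))]

lemma cnt_real (p : ℝ) (N : ℕ) (v : Fin N → Bool) :
    (((univ.filter fun n => v n = true).card : ℕ) : ℝ) = X p N v + N * p := by
  have h1 : (((univ.filter fun n => v n = true).card : ℕ) : ℝ)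
      = ∑ n, if v n = true then (1:ℝ) else 0 := by
    rw [card_filter]
    push_cast [apply_ite ((↑) : ℕ → ℝ)]
    rfl
  rw [h1, X]
  unfold c
  rw [Finset.sum_sub_distrib]
  simp [mul_comm]

noncomputable def lamA (N : ℕ) (p μv : ℝ) : ℝ :=
  ∑ v : Fin N → Bool,
    if μv * (N : ℝ) ≤ ((univ.filter fun n => v n = true).card : ℝ) then W p N v else 0

lemma sum_ite_split {N : ℕ} (q : (Fin N → Bool) → Prop) [DecidablePred q]
    (f : (Fin N → Bool) → ℝ) :
    ∑ v, f v = (∑ v, if q v then f v else 0) + ∑ v, if ¬ q v then f v else 0 := by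
  rw [← Finset.sum_add_distrib]
  apply Finset.sum_congr rfl
  intro v _
  by_cases h : q v <;> simp [h]

lemma sum_ite_mono {N : ℕ} {p : ℝ} (hp0 : 0 ≤ p) (hp1 : p ≤ 1)
    (q1 q2 : (Fin N → Bool) → Prop) [DecidablePred q1] [DecidablePred q2]
    (h : ∀ v, q1 v → q2 v) :
    (∑ v, if q1 v then W p N v else 0) ≤ ∑ v, if q2 v then W p N v else 0 := by
  apply Finset.sum_le_sum
  intro v _
  by_cases h1 : q1 v
  · simp [h1, h v h1]
  · simp only [h1, if_false]
    split
    · exact W_nonneg hp0 hp1 N v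
    · exact le_refl _

lemma sum_ite_nonneg {N : ℕ} {p : ℝ} (hp0 : 0 ≤ p) (hp1 : p ≤ 1)
    (q : (Fin N → Bool) → Prop) [DecidablePred q] :
    0 ≤ ∑ v, if q v then W p N v else 0 := by
  apply Finset.sum_nonneg
  intro v _
  split
  · exact W_nonneg hp0 hp1 N v
  · exact le_refl _

lemma sum_ite_le_one {N : ℕ} {p : ℝ} (hp0 : 0 ≤ p) (hp1 : p ≤ 1)
    (q : (Fin N → Bool) → Prop) [DecidablePred q] :
    (∑ v, if q v then W p N v else 0) ≤ 1 := by
  rw [← M0 p N]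
  apply Finset.sum_le_sum
  intro v _
  split
  · exact le_refl _
  · exact W_nonneg hp0 hp1 N v

lemma lamA_nonneg {N : ℕ} {p μv : ℝ} (hp0 : 0 ≤ p) (hp1 : p ≤ 1) : 0 ≤ lamA N p μv :=
  sum_ite_nonneg hp0 hp1 _

lemma lamA_le_one {N : ℕ} {p μv : ℝ} (hp0 : 0 ≤ p) (hp1 : p ≤ 1) : lamA N p μv ≤ 1 :=
  sum_ite_le_one hp0 hp1 _

lemma one_sub_lamA {N : ℕ} {p μv : ℝ} :
    1 - lamA N p μv = ∑ v : Fin N → Bool,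
      if ¬ (μv * (N : ℝ) ≤ ((univ.filter fun n => v n = true).card : ℝ)) then W p N v else 0 := by
  have h := sum_ite_split
    (fun v : Fin N → Bool => μv * (N : ℝ) ≤ ((univ.filter fun n => v n = true).card : ℝ))
    (fun v => W p N v)
  rw [M0] at h
  rw [lamA]
  linarith [h]

lemma cheb {p t : ℝ} (hp0 : 0 ≤ p) (hp1 : p ≤ 1) (ht : 0 < t) (N : ℕ)
    (q : (Fin N → Bool) → Prop) [DecidablePred q]
    (h : ∀ v, q v → t ≤ |X p N v|) :
    (∑ v, if q v then W p N v else 0) ≤ (N : ℝ) * (p * (1 - p)) / t ^ 2 := by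
  rw [le_div_iff₀ (by positivity)]
  calc (∑ v, if q v then W p N v else 0) * t ^ 2
      = ∑ v, (if q v then W p N v else 0) * t ^ 2 := by rw [Finset.sum_mul]
    _ ≤ ∑ v : Fin N → Bool, W p N v * X p N v ^ 2 := by
        apply Finset.sum_le_sum
        intro v _
        by_cases hq : q v
        · rw [if_pos hq]
          have h2 : t ^ 2 ≤ X p N v ^ 2 := by
            have := h v hq
            calc t ^ 2 ≤ |X p N v| ^ 2 := by
                  apply pow_le_pow_left₀ ht.le this
              _ = X p N v ^ 2 := sq_abs _
          exact mul_le_mul_of_nonneg_left h2 (W_nonneg hp0 hp1 N v)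
        · rw [if_neg hq, zero_mul]
          exact mul_nonneg (W_nonneg hp0 hp1 N v) (sq_nonneg _)
    _ = (N : ℝ) * (p * (1 - p)) := M2 p N

lemma max_sub_max_neg (x : ℝ) : max x 0 - max (-x) 0 = x := by
  rcases le_total x 0 with h | h
  · rw [max_eq_right h, max_eq_left (by linarith)]; ring
  · rw [max_eq_left h, max_eq_right (by linarith)]; ring

lemma anti {p : ℝ} (hp0 : 0 ≤ p) (hp1 : p ≤ 1) (N : ℕ)
    (hv : 1 ≤ (N : ℝ) * (p * (1 - p))) :
    1/2048 ≤ (∑ v : Fin N → Bool, if X p N v < 0 then W p N v else 0) ∧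
    1/2048 ≤ (∑ v : Fin N → Bool, if 0 ≤ X p N v then W p N v else 0) := by
  set vb : ℝ := (N : ℝ) * (p * (1 - p)) with hvb
  have h0 : 0 < vb := by linarith
  set t : ℝ := Real.sqrt (vb / 2) with htdef
  have ht : 0 < t := Real.sqrt_pos.mpr (by linarith)
  have ht2 : t ^ 2 = vb / 2 := Real.sq_sqrt (by linarith)
  have hM2 : ∑ v : Fin N → Bool, W p N v * X p N v ^ 2 = vb := M2 p N
  have hM4 : ∑ v : Fin N → Bool, W p N v * X p N v ^ 4 ≤ 4 * vb ^ 2 := by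
    have := M4 p hp0 hp1 N
    nlinarith [this]
  -- the "spread" event
  set SG : ℝ := ∑ v : Fin N → Bool, if vb/2 ≤ X p N v ^ 2 then W p N v * X p N v ^ 2 else 0
    with hSGdef
  set PG : ℝ := ∑ v : Fin N → Bool, if vb/2 ≤ X p N v ^ 2 then W p N v else 0 with hPGdef
  have hPG0 : 0 ≤ PG := sum_ite_nonneg hp0 hp1 _
  have hSG : vb / 2 ≤ SG := by
    have hsplit := sum_ite_split (fun v => vb/2 ≤ X p N v ^ 2)
      (fun v => W p N v * X p N v ^ 2)
    have hrest : (∑ v : Fin N → Bool,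
        if ¬ (vb/2 ≤ X p N v ^ 2) then W p N v * X p N v ^ 2 else 0) ≤ vb / 2 := by
      calc (∑ v : Fin N → Bool,
            if ¬ (vb/2 ≤ X p N v ^ 2) then W p N v * X p N v ^ 2 else 0)
          ≤ ∑ v : Fin N → Bool, W p N v * (vb/2) := by
            apply Finset.sum_le_sum
            intro v _
            by_cases hq : vb/2 ≤ X p N v ^ 2
            · rw [if_neg (by simpa using hq)]
              exact mul_nonneg (W_nonneg hp0 hp1 N v) (by linarith)
            · rw [if_pos hq]
              exact mul_le_mul_of_nonneg_left (le_of_not_ge hq) (W_nonneg hp0 hp1 N v)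
        _ = vb / 2 := by rw [← Finset.sum_mul, M0, one_mul]
    rw [hM2] at hsplit
    linarith
  -- Cauchy-Schwarz for SG
  have hCS1 : SG ^ 2 ≤ PG * (4 * vb ^ 2) := by
    have key := Finset.sum_mul_sq_le_sq_mul_sq Finset.univ
      (fun v : Fin N → Bool => if vb/2 ≤ X p N v ^ 2 then Real.sqrt (W p N v) else 0)
      (fun v : Fin N → Bool => Real.sqrt (W p N v) * X p N v ^ 2)
    have e1 : ∀ v : Fin N → Bool,
        (if vb/2 ≤ X p N v ^ 2 then Real.sqrt (W p N v) else 0)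
          * (Real.sqrt (W p N v) * X p N v ^ 2)
        = (if vb/2 ≤ X p N v ^ 2 then W p N v * X p N v ^ 2 else 0) := by
      intro v
      by_cases hq : vb/2 ≤ X p N v ^ 2
      · rw [if_pos hq, if_pos hq, ← mul_assoc, Real.mul_self_sqrt (W_nonneg hp0 hp1 N v)]
      · rw [if_neg hq, if_neg hq, zero_mul]
    have e2 : ∀ v : Fin N → Bool,
        (if vb/2 ≤ X p N v ^ 2 then Real.sqrt (W p N v) else 0) ^ 2
        = (if vb/2 ≤ X p N v ^ 2 then W p N v else 0) := by
      intro v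
      by_cases hq : vb/2 ≤ X p N v ^ 2
      · rw [if_pos hq, if_pos hq, Real.sq_sqrt (W_nonneg hp0 hp1 N v)]
      · rw [if_neg hq, if_neg hq, zero_pow two_ne_zero]
    have e3 : ∀ v : Fin N → Bool,
        (Real.sqrt (W p N v) * X p N v ^ 2) ^ 2 = W p N v * X p N v ^ 4 := by
      intro v
      rw [mul_pow, Real.sq_sqrt (W_nonneg hp0 hp1 N v)]
      ring
    simp only [e1, e2, e3] at key
    calc SG ^ 2 ≤ PG * ∑ v : Fin N → Bool, W p N v * X p N v ^ 4 := key
      _ ≤ PG * (4 * vb ^ 2) := mul_le_mul_of_nonneg_left hM4 hPG0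
  have h16 : 1/16 ≤ PG := by
    nlinarith [hCS1, h0, mul_le_mul hSG hSG (by linarith : (0:ℝ) ≤ vb/2) (by linarith : (0:ℝ) ≤ SG),
      mul_pos h0 h0]
  -- split spread into two tails
  set a : ℝ := ∑ v : Fin N → Bool, if t ≤ X p N v then W p N v else 0 with hadef
  set b : ℝ := ∑ v : Fin N → Bool, if X p N v ≤ -t then W p N v else 0 with hbdef
  have ha0 : 0 ≤ a := sum_ite_nonneg hp0 hp1 _
  have hb0 : 0 ≤ b := sum_ite_nonneg hp0 hp1 _
  have hab : PG ≤ a + b := by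
    rw [hPGdef, hadef, hbdef, ← Finset.sum_add_distrib]
    apply Finset.sum_le_sum
    intro v _
    by_cases hq : vb/2 ≤ X p N v ^ 2
    · rw [if_pos hq]
      have habs : t ≤ |X p N v| := by
        rw [htdef]
        calc Real.sqrt (vb/2) ≤ Real.sqrt (X p N v ^ 2) := Real.sqrt_le_sqrt hq
          _ = |X p N v| := Real.sqrt_sq_eq_abs _
      rcases le_total 0 (X p N v) with hx | hx
      · rw [abs_of_nonneg hx] at habs
        rw [if_pos habs]
        have : ¬ (X p N v ≤ -t) := by intro hcon; nlinarith
        rw [if_neg this]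
        simp
      · rw [abs_of_nonpos hx] at habs
        have hle : X p N v ≤ -t := by linarith
        rw [if_pos hle]
        have : ¬ (t ≤ X p N v) := by intro hcon; nlinarith
        rw [if_neg this, zero_add]
    · rw [if_neg hq]
      have h1 : (0:ℝ) ≤ if t ≤ X p N v then W p N v else 0 := by
        split
        · exact W_nonneg hp0 hp1 N v
        · exact le_refl _
      have h2 : (0:ℝ) ≤ if X p N v ≤ -t then W p N v else 0 := by
        split
        · exact W_nonneg hp0 hp1 N v
        · exact le_refl _
      linarith
  -- expectations of positive/negative parts
  set Ep : ℝ := ∑ v : Fin N → Bool, W p N v * max (X p N v) 0 with hEpdef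
  set En : ℝ := ∑ v : Fin N → Bool, W p N v * max (-(X p N v)) 0 with hEndef
  have hEpEn : Ep = En := by
    have : Ep - En = ∑ v : Fin N → Bool, W p N v * X p N v := by
      rw [hEpdef, hEndef, ← Finset.sum_sub_distrib]
      apply Finset.sum_congr rfl
      intro v _
      rw [← mul_sub, max_sub_max_neg]
    rw [M1] at this
    linarith
  have hEp_ge : t * a ≤ Ep := by
    rw [hadef, Finset.mul_sum, hEpdef]
    apply Finset.sum_le_sum
    intro v _
    by_cases hq : t ≤ X p N v
    · rw [if_pos hq]
      have : t ≤ max (X p N v) 0 := le_max_of_le_left hq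
      calc t * W p N v = W p N v * t := mul_comm _ _
        _ ≤ W p N v * max (X p N v) 0 := mul_le_mul_of_nonneg_left this (W_nonneg hp0 hp1 N v)
    · rw [if_neg hq, mul_zero]
      exact mul_nonneg (W_nonneg hp0 hp1 N v) (le_max_right _ _)
  have hEn_ge : t * b ≤ En := by
    rw [hbdef, Finset.mul_sum, hEndef]
    apply Finset.sum_le_sum
    intro v _
    by_cases hq : X p N v ≤ -t
    · rw [if_pos hq]
      have : t ≤ max (-(X p N v)) 0 := le_max_of_le_left (by linarith)
      calc t * W p N v = W p N v * t := mul_comm _ _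
        _ ≤ W p N v * max (-(X p N v)) 0 :=
            mul_le_mul_of_nonneg_left this (W_nonneg hp0 hp1 N v)
    · rw [if_neg hq, mul_zero]
      exact mul_nonneg (W_nonneg hp0 hp1 N v) (le_max_right _ _)
  set Pneg : ℝ := ∑ v : Fin N → Bool, if X p N v < 0 then W p N v else 0 with hPnegdef
  set Ppos : ℝ := ∑ v : Fin N → Bool, if 0 < X p N v then W p N v else 0 with hPposdef
  have hPneg0 : 0 ≤ Pneg := sum_ite_nonneg hp0 hp1 _
  have hPpos0 : 0 ≤ Ppos := sum_ite_nonneg hp0 hp1 _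
  have hEn_CS : En ^ 2 ≤ Pneg * vb := by
    have key := Finset.sum_mul_sq_le_sq_mul_sq Finset.univ
      (fun v : Fin N → Bool => if X p N v < 0 then Real.sqrt (W p N v) else 0)
      (fun v : Fin N → Bool => Real.sqrt (W p N v) * max (-(X p N v)) 0)
    have e1 : ∀ v : Fin N → Bool,
        (if X p N v < 0 then Real.sqrt (W p N v) else 0)
          * (Real.sqrt (W p N v) * max (-(X p N v)) 0)
        = W p N v * max (-(X p N v)) 0 := by
      intro v
      by_cases hq : X p N v < 0
      · rw [if_pos hq, ← mul_assoc, Real.mul_self_sqrt (W_nonneg hp0 hp1 N v)]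
      · rw [if_neg hq, zero_mul]
        have : max (-(X p N v)) 0 = 0 := max_eq_right (by push_neg at hq; linarith)
        rw [this, mul_zero]
    have e2 : ∀ v : Fin N → Bool,
        (if X p N v < 0 then Real.sqrt (W p N v) else 0) ^ 2
        = (if X p N v < 0 then W p N v else 0) := by
      intro v
      by_cases hq : X p N v < 0
      · rw [if_pos hq, if_pos hq, Real.sq_sqrt (W_nonneg hp0 hp1 N v)]
      · rw [if_neg hq, if_neg hq, zero_pow two_ne_zero]
    simp only [e1, e2] at key
    have hg : (∑ v : Fin N → Bool, (Real.sqrt (W p N v) * max (-(X p N v)) 0) ^ 2) ≤ vb := by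
      rw [← hM2]
      apply Finset.sum_le_sum
      intro v _
      rw [mul_pow, Real.sq_sqrt (W_nonneg hp0 hp1 N v)]
      apply mul_le_mul_of_nonneg_left _ (W_nonneg hp0 hp1 N v)
      rcases le_total (X p N v) 0 with hx | hx
      · rw [max_eq_left (by linarith)]; nlinarith
      · rw [max_eq_right (by linarith)]; nlinarith [sq_nonneg (X p N v)]
    calc En ^ 2 ≤ Pneg * ∑ v : Fin N → Bool, (Real.sqrt (W p N v) * max (-(X p N v)) 0) ^ 2 :=
          key
      _ ≤ Pneg * vb := mul_le_mul_of_nonneg_left hg hPneg0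
  have hEp_CS : Ep ^ 2 ≤ Ppos * vb := by
    have key := Finset.sum_mul_sq_le_sq_mul_sq Finset.univ
      (fun v : Fin N → Bool => if 0 < X p N v then Real.sqrt (W p N v) else 0)
      (fun v : Fin N → Bool => Real.sqrt (W p N v) * max (X p N v) 0)
    have e1 : ∀ v : Fin N → Bool,
        (if 0 < X p N v then Real.sqrt (W p N v) else 0)
          * (Real.sqrt (W p N v) * max (X p N v) 0)
        = W p N v * max (X p N v) 0 := by
      intro v
      by_cases hq : 0 < X p N v
      · rw [if_pos hq, ← mul_assoc, Real.mul_self_sqrt (W_nonneg hp0 hp1 N v)]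
      · rw [if_neg hq, zero_mul]
        have : max (X p N v) 0 = 0 := max_eq_right (by push_neg at hq; linarith)
        rw [this, mul_zero]
    have e2 : ∀ v : Fin N → Bool,
        (if 0 < X p N v then Real.sqrt (W p N v) else 0) ^ 2
        = (if 0 < X p N v then W p N v else 0) := by
      intro v
      by_cases hq : 0 < X p N v
      · rw [if_pos hq, if_pos hq, Real.sq_sqrt (W_nonneg hp0 hp1 N v)]
      · rw [if_neg hq, if_neg hq, zero_pow two_ne_zero]
    simp only [e1, e2] at key
    have hg : (∑ v : Fin N → Bool, (Real.sqrt (W p N v) * max (X p N v) 0) ^ 2) ≤ vb := by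
      rw [← hM2]
      apply Finset.sum_le_sum
      intro v _
      rw [mul_pow, Real.sq_sqrt (W_nonneg hp0 hp1 N v)]
      apply mul_le_mul_of_nonneg_left _ (W_nonneg hp0 hp1 N v)
      rcases le_total (X p N v) 0 with hx | hx
      · rw [max_eq_right hx]; nlinarith [sq_nonneg (X p N v)]
      · rw [max_eq_left hx]
    calc Ep ^ 2 ≤ Ppos * ∑ v : Fin N → Bool, (Real.sqrt (W p N v) * max (X p N v) 0) ^ 2 := key
      _ ≤ Ppos * vb := mul_le_mul_of_nonneg_left hg hPpos0
  constructor
  · by_cases hc : 1/32 ≤ b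
    · have : b ≤ Pneg := by
        apply sum_ite_mono hp0 hp1
        intro v hvle
        nlinarith
      linarith
    · have hc' : 1/32 ≤ a := by push_neg at hc; linarith
      have h1 : t * a ≤ En := by rw [← hEpEn]; exact hEp_ge
      have h2 : (t * a) ^ 2 ≤ Pneg * vb := by
        calc (t * a) ^ 2 ≤ En ^ 2 := by
              apply pow_le_pow_left₀ (by positivity) h1
          _ ≤ Pneg * vb := hEn_CS
      have h3 : t ^ 2 * a ^ 2 ≤ Pneg * vb := by rw [← mul_pow]; exact h2
      rw [ht2] at h3
      nlinarith [h3, h0, mul_le_mul hc' hc' (by norm_num : (0:ℝ) ≤ 1/32) ha0]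
  · have hPle : Ppos ≤ ∑ v : Fin N → Bool, if 0 ≤ X p N v then W p N v else 0 := by
      apply sum_ite_mono hp0 hp1
      intro v hvlt
      linarith
    by_cases hc : 1/32 ≤ a
    · have : a ≤ Ppos := by
        apply sum_ite_mono hp0 hp1
        intro v hvle
        nlinarith
      linarith
    · have hc' : 1/32 ≤ b := by push_neg at hc; linarith
      have h1 : t * b ≤ Ep := by rw [hEpEn]; exact hEn_ge
      have h2 : (t * b) ^ 2 ≤ Ppos * vb := by
        calc (t * b) ^ 2 ≤ Ep ^ 2 := by
              apply pow_le_pow_left₀ (by positivity) h1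
          _ ≤ Ppos * vb := hEp_CS
      have h3 : t ^ 2 * b ^ 2 ≤ Ppos * vb := by rw [← mul_pow]; exact h2
      rw [ht2] at h3
      nlinarith [h3, h0, mul_le_mul hc' hc' (by norm_num : (0:ℝ) ≤ 1/32) hb0]

lemma cheb_final {p f' : ℝ} {N : ℕ} (hp0 : 0 ≤ p) (hp1 : p ≤ 1) (hf : 0 < f') (hN : 1 ≤ N)
    {A : ℝ} (hA : A ≤ (N : ℝ) * (p * (1 - p)) / (f' * N) ^ 2) :
    A ≤ 1 / (4 * f' ^ 2 * N) := by
  have hNR : (1:ℝ) ≤ (N:ℝ) := by exact_mod_cast hN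
  refine le_trans hA ?_
  rw [div_le_div_iff₀ (by positivity) (by positivity)]
  nlinarith [sq_nonneg (1 - 2*p), mul_pos (mul_pos (by positivity : (0:ℝ) < 4*f'^2) (by linarith : (0:ℝ) < (N:ℝ))) (by linarith : (0:ℝ) < (N:ℝ))]

lemma lamA_upper {p μv f' : ℝ} (hp0 : 0 ≤ p) (hp1 : p ≤ 1) (hf : 0 < f')
    (hpμ : p + f' ≤ μv) {N : ℕ} (hN : 1 ≤ N) :
    lamA N p μv ≤ 1 / (4 * f' ^ 2 * N) := by
  have hNR : (1:ℝ) ≤ (N:ℝ) := by exact_mod_cast hN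
  apply cheb_final hp0 hp1 hf hN
  unfold lamA
  apply cheb hp0 hp1 (by positivity) N
  intro v hv
  have hc := cnt_real p N v
  rw [hc] at hv
  have : f' * N ≤ X p N v := by nlinarith
  exact le_trans this (le_abs_self _)

lemma one_sub_lamA_upper {p μv f' : ℝ} (hp0 : 0 ≤ p) (hp1 : p ≤ 1) (hf : 0 < f')
    (hpμ : μv + f' ≤ p) {N : ℕ} (hN : 1 ≤ N) :
    1 - lamA N p μv ≤ 1 / (4 * f' ^ 2 * N) := by
  have hNR : (1:ℝ) ≤ (N:ℝ) := by exact_mod_cast hN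
  rw [one_sub_lamA]
  apply cheb_final hp0 hp1 hf hN
  apply cheb hp0 hp1 (by positivity) N
  intro v hv
  rw [not_le, cnt_real p N v] at hv
  have : f' * N ≤ -(X p N v) := by nlinarith
  exact le_trans this (neg_le_abs _)

lemma small_bound {f' : ℝ} {N N₀ : ℕ} (hf : 0 < f') (hceil : ⌈1/(2*f'^2)⌉₊ ≤ N₀)
    (hN : N₀ < N) : 1 / (4 * f' ^ 2 * (N:ℝ)) ≤ 1/2 := by
  have h1 : 1/(2*f'^2) ≤ (N:ℝ) := by
    refine le_trans (Nat.le_ceil _) ?_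
    exact_mod_cast le_of_lt (lt_of_le_of_lt hceil hN)
  have hN0 : (0:ℝ) < (N:ℝ) := lt_of_lt_of_le (by positivity) h1
  rw [div_le_div_iff₀ (by positivity) two_pos]
  rw [div_le_iff₀ (by positivity)] at h1
  nlinarith

lemma exists_N0_H {p μv : ℝ} (hp0 : 0 ≤ p) (hp1 : p ≤ 1) (hμ0 : 0 < μv) (hμ1 : μv < 1)
    (hpμ : p ≤ μv) :
    ∃ N₀ : ℕ, 0 < N₀ ∧ ∀ N : ℕ, N₀ < N → 1/2048 ≤ 1 - lamA N p μv := by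
  rcases eq_or_lt_of_le hpμ with heq | hlt
  · subst heq
    refine ⟨⌈1/(p*(1-p))⌉₊ + 1, Nat.succ_pos _, fun N hN => ?_⟩
    have hm2 : 0 < p*(1-p) := by nlinarith
    have h1 : 1 ≤ (N:ℝ) * (p*(1-p)) := by
      have h2 : 1/(p*(1-p)) ≤ (N:ℝ) := by
        refine le_trans (Nat.le_ceil _) ?_
        exact_mod_cast le_of_lt (lt_of_le_of_lt (Nat.le_succ _) hN)
      rw [div_le_iff₀ hm2] at h2
      linarith
    have hanti := (anti hp0 hp1 N h1).1
    rw [one_sub_lamA]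
    refine le_trans hanti (sum_ite_mono hp0 hp1 _ _ ?_)
    intro v hv
    rw [not_le, cnt_real p N v]
    nlinarith
  · refine ⟨⌈1/(2*(μv-p)^2)⌉₊ + 1, Nat.succ_pos _, fun N hN => ?_⟩
    have hN1 : 1 ≤ N := le_trans (Nat.succ_le_succ (Nat.zero_le _)) (le_of_lt hN)
    have hup : lamA N p μv ≤ 1 / (4 * (μv-p) ^ 2 * N) :=
      lamA_upper hp0 hp1 (by linarith) (by linarith) hN1
    have hsm : 1 / (4 * (μv-p) ^ 2 * (N:ℝ)) ≤ 1/2 :=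
      small_bound (by linarith) (Nat.le_succ _) hN
    linarith

lemma exists_N0_L {p μv : ℝ} (hp0 : 0 ≤ p) (hp1 : p ≤ 1) (hμ0 : 0 < μv) (hμ1 : μv < 1)
    (hpμ : μv ≤ p) :
    ∃ N₀ : ℕ, 0 < N₀ ∧ ∀ N : ℕ, N₀ < N → 1/2048 ≤ lamA N p μv := by
  rcases eq_or_lt_of_le hpμ with heq | hlt
  · subst heq
    refine ⟨⌈1/(μv*(1-μv))⌉₊ + 1, Nat.succ_pos _, fun N hN => ?_⟩
    have hm2 : 0 < μv*(1-μv) := by nlinarith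
    have h1 : 1 ≤ (N:ℝ) * (μv*(1-μv)) := by
      have h2 : 1/(μv*(1-μv)) ≤ (N:ℝ) := by
        refine le_trans (Nat.le_ceil _) ?_
        exact_mod_cast le_of_lt (lt_of_le_of_lt (Nat.le_succ _) hN)
      rw [div_le_iff₀ hm2] at h2
      linarith
    have hanti := (anti hp0 hp1 N h1).2
    refine le_trans hanti ?_
    unfold lamA
    refine sum_ite_mono hp0 hp1 _ _ ?_
    intro v hv
    rw [cnt_real μv N v]
    nlinarith
  · refine ⟨⌈1/(2*(p-μv)^2)⌉₊ + 1, Nat.succ_pos _, fun N hN => ?_⟩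
    have hN1 : 1 ≤ N := le_trans (Nat.succ_le_succ (Nat.zero_le _)) (le_of_lt hN)
    have hup : 1 - lamA N p μv ≤ 1 / (4 * (p-μv) ^ 2 * N) :=
      one_sub_lamA_upper hp0 hp1 (by linarith) (by linarith) hN1
    have hsm : 1 / (4 * (p-μv) ^ 2 * (N:ℝ)) ≤ 1/2 :=
      small_bound (by linarith) (Nat.le_succ _) hN
    linarith


end VT
end Aux

section Main
set_option maxHeartbeats 1000000

open Finset in
lemma nblambdaA_symm_eq {M S : ℕ} (I : NBInstance M S) (σ : Fin S → ℝ) (ω : Fin M) :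
    nblambdaA I (fun _ => σ) ω = VT.lamA I.N (∑ s, I.Psig s ω * σ s) I.μ := rfl

open Finset in
lemma symfR_eq {M S : ℕ} (p : NBParams M S) (σ : Fin S → ℝ) (ω : Fin M) :
    symfR p σ ω = p.μ - ∑ s, p.Psig s ω * σ s := by
  unfold symfR
  have := p.hPsigsum ω
  simp only [mul_sub, mul_one, Finset.sum_sub_distrib, this]
  ring

open Finset in
lemma sum_LH {M S : ℕ} (p : NBParams M S) :
    (∑ ω ∈ Lset p, p.P ω) + (∑ ω ∈ Hset p, p.P ω) = 1 := by
  have h := Finset.sum_filter_add_sum_filter_not Finset.univ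
    (fun ω => p.αA ω < p.μ) p.P
  have hH : Finset.univ.filter (fun ω => ¬ p.αA ω < p.μ) = Hset p := by
    apply Finset.filter_congr
    intro ω _
    constructor
    · intro h1
      exact lt_of_le_of_ne (not_lt.mp h1) (Ne.symm (p.hαAμ ω))
    · intro h1
      exact not_lt.mpr (le_of_lt h1)
  rw [hH, p.hPsum] at h
  exact h

open Finset in
/-- Corollary 7 of the paper. For the symmetric profile sequence
induced by a fixed strategy `σ`, with excess expected vote share `f`: if `f > 0` the
fidelities converge to `1`; if `f ≤ 0` the fidelities stay a constant `η' > 0` away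
from `1` for all `N > N₀`. -/
theorem nb_symmetric_profile_fidelity_dichotomy {M S : ℕ} (Q : NBSeq M S)
    (σ : Fin S → ℝ) (hσ : ∀ s, 0 ≤ σ s ∧ σ s ≤ 1) :
    (0 < symf Q.params σ →
      Filter.Tendsto (fun N => nbfid (Q.inst N) (fun _ => σ)) Filter.atTop (nhds 1)) ∧
    (symf Q.params σ ≤ 0 →
      ∃ (N₀ : ℕ) (η' : ℝ), 0 < N₀ ∧ 0 < η' ∧
        ∀ N : ℕ, N₀ < N → nbfid (Q.inst N) (fun _ => σ) ≤ 1 - η') := by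
  have hμ0 := Q.params.hμ0
  have hμ1 := Q.params.hμ1
  set pA : Fin M → ℝ := fun ω => ∑ s, Q.params.Psig s ω * σ s with hpAdef
  have hpA0 : ∀ ω, 0 ≤ pA ω := by
    intro ω
    apply Finset.sum_nonneg
    intro s _
    exact mul_nonneg (Q.params.hPsig s ω) (hσ s).1
  have hpA1 : ∀ ω, pA ω ≤ 1 := by
    intro ω
    calc pA ω ≤ ∑ s, Q.params.Psig s ω * 1 := by
          apply Finset.sum_le_sum
          intro s _
          exact mul_le_mul_of_nonneg_left (hσ s).2 (Q.params.hPsig s ω)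
      _ = 1 := by simp [Q.params.hPsigsum ω]
  have hfid : ∀ N : ℕ, nbfid (Q.inst N) (fun _ => σ) =
      (∑ ω ∈ Lset Q.params, Q.params.P ω * (1 - VT.lamA N (pA ω) Q.params.μ)) +
      ∑ ω ∈ Hset Q.params, Q.params.P ω * VT.lamA N (pA ω) Q.params.μ := by
    intro N
    unfold nbfid
    simp only [nblambdaA_symm_eq, Q.hshare N, Q.hN N]
    rfl
  have hsumLH := sum_LH Q.params
  have hfA : ∀ ω, symfA Q.params σ ω = pA ω - Q.params.μ := fun ω => rfl
  have hfR : ∀ ω, symfR Q.params σ ω = Q.params.μ - pA ω := fun ω => symfR_eq Q.params σ ω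
  have hlam0 : ∀ (N : ℕ) (ω : Fin M), 0 ≤ VT.lamA N (pA ω) Q.params.μ :=
    fun N ω => VT.lamA_nonneg (hpA0 ω) (hpA1 ω)
  have hlam1 : ∀ (N : ℕ) (ω : Fin M), VT.lamA N (pA ω) Q.params.μ ≤ 1 :=
    fun N ω => VT.lamA_le_one (hpA0 ω) (hpA1 ω)
  have hfid_le_one : ∀ N : ℕ, nbfid (Q.inst N) (fun _ => σ) ≤ 1 := by
    intro N
    rw [hfid N]
    have h1 : (∑ ω ∈ Lset Q.params, Q.params.P ω * (1 - VT.lamA N (pA ω) Q.params.μ))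
        ≤ ∑ ω ∈ Lset Q.params, Q.params.P ω := by
      apply Finset.sum_le_sum
      intro ω _
      have := hlam0 N ω
      nlinarith [(Q.params.hP ω).le]
    have h2 : (∑ ω ∈ Hset Q.params, Q.params.P ω * VT.lamA N (pA ω) Q.params.μ)
        ≤ ∑ ω ∈ Hset Q.params, Q.params.P ω := by
      apply Finset.sum_le_sum
      intro ω _
      have := hlam1 N ω
      nlinarith [(Q.params.hP ω).le]
    linarith [hsumLH]
  constructor
  · -- f > 0
    intro hf
    set f : ℝ := symf Q.params σ with hfdef
    have hfH : ∀ ω ∈ Hset Q.params, f + Q.params.μ ≤ pA ω := by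
      intro ω hω
      have h1 : f ≤ symfA Q.params σ ω :=
        le_trans (min_le_left _ _) (Finset.inf'_le _ hω)
      rw [hfA ω] at h1
      linarith
    have hfL : ∀ ω ∈ Lset Q.params, pA ω + f ≤ Q.params.μ := by
      intro ω hω
      have h1 : f ≤ symfR Q.params σ ω :=
        le_trans (min_le_right _ _) (Finset.inf'_le _ hω)
      rw [hfR ω] at h1
      linarith
    have hlow : ∀ N : ℕ, 1 ≤ N →
        1 - (1/(4*f^2))/(N:ℝ) ≤ nbfid (Q.inst N) (fun _ => σ) := by
      intro N hN
      have hNR : (1:ℝ) ≤ (N:ℝ) := by exact_mod_cast hN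
      have hceq : (1/(4*f^2))/(N:ℝ) = 1/(4*f^2*(N:ℝ)) := by
        rw [div_div]
      rw [hfid N, hceq]
      have hL : ∀ ω ∈ Lset Q.params,
          Q.params.P ω * (1 - 1/(4*f^2*(N:ℝ))) ≤
          Q.params.P ω * (1 - VT.lamA N (pA ω) Q.params.μ) := by
        intro ω hω
        apply mul_le_mul_of_nonneg_left _ (Q.params.hP ω).le
        have := VT.lamA_upper (hpA0 ω) (hpA1 ω) hf (hfL ω hω) hN
        linarith
      have hH : ∀ ω ∈ Hset Q.params,
          Q.params.P ω * (1 - 1/(4*f^2*(N:ℝ))) ≤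
          Q.params.P ω * VT.lamA N (pA ω) Q.params.μ := by
        intro ω hω
        apply mul_le_mul_of_nonneg_left _ (Q.params.hP ω).le
        have := VT.one_sub_lamA_upper (μv := Q.params.μ) (hpA0 ω) (hpA1 ω) hf
          (by linarith [hfH ω hω]) hN
        linarith
      calc 1 - 1/(4*f^2*(N:ℝ))
          = ((∑ ω ∈ Lset Q.params, Q.params.P ω) + ∑ ω ∈ Hset Q.params, Q.params.P ω)
            * (1 - 1/(4*f^2*(N:ℝ))) := by rw [hsumLH, one_mul]
        _ = (∑ ω ∈ Lset Q.params, Q.params.P ω * (1 - 1/(4*f^2*(N:ℝ))))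
            + ∑ ω ∈ Hset Q.params, Q.params.P ω * (1 - 1/(4*f^2*(N:ℝ))) := by
            rw [add_mul, Finset.sum_mul, Finset.sum_mul]
        _ ≤ _ := add_le_add (Finset.sum_le_sum hL) (Finset.sum_le_sum hH)
    apply tendsto_of_tendsto_of_tendsto_of_le_of_le'
      (g := fun N : ℕ => 1 - (1/(4*f^2))/(N:ℝ)) (h := fun _ : ℕ => (1:ℝ))
    · have := tendsto_const_div_atTop_nhds_zero_nat (1/(4*f^2))
      have h2 := Filter.Tendsto.sub (tendsto_const_nhds (x := (1:ℝ))) this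
      simpa using h2
    · exact tendsto_const_nhds
    · filter_upwards [Filter.eventually_ge_atTop 1] with N hN
      exact hlow N hN
    · filter_upwards with N
      exact hfid_le_one N
  · -- f ≤ 0
    intro hf
    rcases min_le_iff.mp hf with hH | hL
    · obtain ⟨ω, hωH, hωeq⟩ := Finset.exists_mem_eq_inf'
        (Hset_nonempty Q.params) (symfA Q.params σ)
      have hfa : pA ω ≤ Q.params.μ := by
        have := hωeq ▸ hH
        rw [hfA ω] at this
        linarith
      obtain ⟨N₀, hN₀pos, hbd⟩ :=
        VT.exists_N0_H (hpA0 ω) (hpA1 ω) hμ0 hμ1 hfa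
      refine ⟨N₀, Q.params.P ω / 2048, hN₀pos, by have := Q.params.hP ω; positivity, fun N hN => ?_⟩
      have hb := hbd N hN
      rw [hfid N]
      have herase : (∑ ω' ∈ (Hset Q.params).erase ω, Q.params.P ω' * VT.lamA N (pA ω') Q.params.μ)
          + Q.params.P ω * VT.lamA N (pA ω) Q.params.μ
          = ∑ ω' ∈ Hset Q.params, Q.params.P ω' * VT.lamA N (pA ω') Q.params.μ :=
        Finset.sum_erase_add _ _ hωH
      have heraseP : (∑ ω' ∈ (Hset Q.params).erase ω, Q.params.P ω') + Q.params.P ω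
          = ∑ ω' ∈ Hset Q.params, Q.params.P ω' := Finset.sum_erase_add _ _ hωH
      have h1 : (∑ ω' ∈ Lset Q.params, Q.params.P ω' * (1 - VT.lamA N (pA ω') Q.params.μ))
          ≤ ∑ ω' ∈ Lset Q.params, Q.params.P ω' := by
        apply Finset.sum_le_sum
        intro ω' _
        nlinarith [(Q.params.hP ω').le, hlam0 N ω']
      have h2 : (∑ ω' ∈ (Hset Q.params).erase ω, Q.params.P ω' * VT.lamA N (pA ω') Q.params.μ)
          ≤ ∑ ω' ∈ (Hset Q.params).erase ω, Q.params.P ω' := by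
        apply Finset.sum_le_sum
        intro ω' _
        nlinarith [(Q.params.hP ω').le, hlam1 N ω']
      have h3 : Q.params.P ω * VT.lamA N (pA ω) Q.params.μ
          ≤ Q.params.P ω * (1 - 1/2048) := by
        apply mul_le_mul_of_nonneg_left _ (Q.params.hP ω).le
        linarith
      linarith [hsumLH, herase, heraseP, h1, h2, h3]
    · obtain ⟨ω, hωL, hωeq⟩ := Finset.exists_mem_eq_inf'
        (Lset_nonempty Q.params) (symfR Q.params σ)
      have hfa : Q.params.μ ≤ pA ω := by
        have := hωeq ▸ hL
        rw [hfR ω] at this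
        linarith
      obtain ⟨N₀, hN₀pos, hbd⟩ :=
        VT.exists_N0_L (hpA0 ω) (hpA1 ω) hμ0 hμ1 hfa
      refine ⟨N₀, Q.params.P ω / 2048, hN₀pos, by have := Q.params.hP ω; positivity, fun N hN => ?_⟩
      have hb := hbd N hN
      rw [hfid N]
      have herase : (∑ ω' ∈ (Lset Q.params).erase ω,
            Q.params.P ω' * (1 - VT.lamA N (pA ω') Q.params.μ))
          + Q.params.P ω * (1 - VT.lamA N (pA ω) Q.params.μ)
          = ∑ ω' ∈ Lset Q.params, Q.params.P ω' * (1 - VT.lamA N (pA ω') Q.params.μ) :=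
        Finset.sum_erase_add _ _ hωL
      have heraseP : (∑ ω' ∈ (Lset Q.params).erase ω, Q.params.P ω') + Q.params.P ω
          = ∑ ω' ∈ Lset Q.params, Q.params.P ω' := Finset.sum_erase_add _ _ hωL
      have h1 : (∑ ω' ∈ Hset Q.params, Q.params.P ω' * VT.lamA N (pA ω') Q.params.μ)
          ≤ ∑ ω' ∈ Hset Q.params, Q.params.P ω' := by
        apply Finset.sum_le_sum
        intro ω' _
        nlinarith [(Q.params.hP ω').le, hlam1 N ω']
      have h2 : (∑ ω' ∈ (Lset Q.params).erase ω,
            Q.params.P ω' * (1 - VT.lamA N (pA ω') Q.params.μ))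
          ≤ ∑ ω' ∈ (Lset Q.params).erase ω, Q.params.P ω' := by
        apply Finset.sum_le_sum
        intro ω' _
        nlinarith [(Q.params.hP ω').le, hlam0 N ω']
      have h3 : Q.params.P ω * (1 - VT.lamA N (pA ω) Q.params.μ)
          ≤ Q.params.P ω * (1 - 1/2048) := by
        apply mul_le_mul_of_nonneg_left _ (Q.params.hP ω).le
        linarith
      linarith [hsumLH, herase, heraseP, h1, h2, h3]


end Main


end Voting
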